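/- arXiv:math/0510518 — 2 statements merged into one kernel-verified Lean document; each statement's English description precedes it below -/
import Mathlib

section
/- Projection theorem for capacities (upper bound direction): Let f: ℝⁿ → [0,∞] be Borel measurable, 1 ≤ m < n, and F ⊂ ℝ^{n-m} compact. Let λ_m be normalized Lebesgue measure on [0,1]^m. Then for every probability measure μ on F, the f-energy of the product measure λ_m × μ equals the (Π_m f)-energy of μ, where (Π_m f)(x) := ∬_{[0,1]^m×[0,1]^m} f(x, y - z) dy dz. Consequently Cap_{Π_m f}(F) ≤ Cap_f([0,1]^m × F). -/
/-!
Tonelli's theorem reorders the four-fold iterated integral defining the energy of `ν × μ` so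
that the two integrals against `ν` are innermost, where for `ν = λ_m` they form
`(Π_m f)(x - x')`. Since `λ_m × μ` is a probability measure on `[0,1]^m × F` whenever `μ` is
one on `F`, the infimum defining `Cap_f([0,1]^m × F)` is at most the one defining
`Cap_{Π_m f}(F)`.
-/

open MeasureTheory
open scoped ENNReal

/-- The `f`-energy `I_f(μ) := ∬ f(x - y) μ(dx) μ(dy)`. -/
noncomputable def energyK {α : Type*} [MeasurableSpace α] [Sub α]
    (f : α → ℝ≥0∞) (μ : Measure α) : ℝ≥0∞ :=
  ∫⁻ x, ∫⁻ y, f (x - y) ∂μ ∂μ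

/-- The `f`-capacity `Cap_f(A) := [inf_{μ ∈ P(A)} I_f(μ)]⁻¹`, with `inf ∅ = ∞`, `1/∞ = 0`. -/
noncomputable def capK {α : Type*} [MeasurableSpace α] [Sub α]
    (f : α → ℝ≥0∞) (A : Set α) : ℝ≥0∞ :=
  (⨅ (μ : Measure α) (_ : IsProbabilityMeasure μ) (_ : μ Aᶜ = 0), energyK f μ)⁻¹

section Projection

variable {α β : Type*} [MeasurableSpace α] [MeasurableSpace β]
  [Sub α] [Sub β] [MeasurableSub₂ α] [MeasurableSub₂ β] {f : α × β → ℝ≥0∞}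

theorem energyK_prod (ν : Measure α) (μ : Measure β) [SFinite ν] [SFinite μ]
    (hf : Measurable f) :
    energyK f (ν.prod μ) = energyK (fun w => ∫⁻ y, ∫⁻ z, f (y - z, w) ∂ν ∂ν) μ := by
  calc ∫⁻ p, ∫⁻ q, f (p - q) ∂(ν.prod μ) ∂(ν.prod μ)
      = ∫⁻ p, ∫⁻ q, f (p.1 - q.1, p.2 - q.2) ∂(ν.prod μ) ∂(ν.prod μ) := rfl
    _ = ∫⁻ y, ∫⁻ x, ∫⁻ z, ∫⁻ x', f (y - z, x - x') ∂μ ∂ν ∂μ ∂ν := by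
        rw [lintegral_prod _ (by fun_prop)]
        exact lintegral_congr fun y => lintegral_congr fun x => lintegral_prod _ (by fun_prop)
    _ = ∫⁻ y, ∫⁻ x, ∫⁻ x', ∫⁻ z, f (y - z, x - x') ∂ν ∂μ ∂μ ∂ν :=
        lintegral_congr fun y => lintegral_congr fun x =>
          lintegral_lintegral_swap (by fun_prop)
    _ = ∫⁻ x, ∫⁻ y, ∫⁻ x', ∫⁻ z, f (y - z, x - x') ∂ν ∂μ ∂ν ∂μ :=
        lintegral_lintegral_swap (by fun_prop)
    _ = ∫⁻ x, ∫⁻ x', ∫⁻ y, ∫⁻ z, f (y - z, x - x') ∂ν ∂ν ∂μ ∂μ :=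
        lintegral_congr fun x => lintegral_lintegral_swap (by fun_prop)

theorem capK_le_capK_prod (ν : Measure α) [IsProbabilityMeasure ν] {B : Set α}
    (hνB : ν Bᶜ = 0) (F : Set β) (hf : Measurable f) :
    capK (fun w => ∫⁻ y, ∫⁻ z, f (y - z, w) ∂ν ∂ν) F ≤ capK f (B ×ˢ F) := by
  refine ENNReal.inv_le_inv.2 (le_iInf fun μ => le_iInf fun _ => le_iInf fun hμF => ?_)
  have hsupp : ν.prod μ (B ×ˢ F)ᶜ = 0 := by
    rw [Set.compl_prod_eq_union]
    refine measure_union_null ?_ ?_ <;> simp [Measure.prod_prod, hνB, hμF]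
  calc ⨅ (ρ : Measure (α × β)) (_ : IsProbabilityMeasure ρ) (_ : ρ (B ×ˢ F)ᶜ = 0), energyK f ρ
      ≤ energyK f (ν.prod μ) :=
        iInf_le_of_le _ (iInf_le_of_le inferInstance (iInf_le_of_le hsupp le_rfl))
    _ = _ := energyK_prod ν μ hf

end Projection

theorem stmt_7_general (m k : ℕ)
    (f : (Fin m → ℝ) × (Fin k → ℝ) → ℝ≥0∞) (hf : Measurable f)
    (F : Set (Fin k → ℝ)) :
    (∀ μ : Measure (Fin k → ℝ), IsProbabilityMeasure μ → μ Fᶜ = 0 →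
      energyK f ((Measure.pi fun _ : Fin m => volume.restrict (Set.Icc (0:ℝ) 1)).prod μ)
        = energyK (fun x : Fin k → ℝ =>
            ∫⁻ y, ∫⁻ z, f (y - z, x)
              ∂(Measure.pi fun _ : Fin m => volume.restrict (Set.Icc (0:ℝ) 1))
              ∂(Measure.pi fun _ : Fin m => volume.restrict (Set.Icc (0:ℝ) 1))) μ) ∧
    capK (fun x : Fin k → ℝ =>
        ∫⁻ y, ∫⁻ z, f (y - z, x)
          ∂(Measure.pi fun _ : Fin m => volume.restrict (Set.Icc (0:ℝ) 1))
          ∂(Measure.pi fun _ : Fin m => volume.restrict (Set.Icc (0:ℝ) 1))) F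
      ≤ capK f ((Set.univ.pi fun _ : Fin m => Set.Icc (0:ℝ) 1) ×ˢ F) := by
  have : IsProbabilityMeasure ((volume : Measure ℝ).restrict (Set.Icc 0 1)) := ⟨by simp⟩
  have hcube : (Measure.pi fun _ : Fin m => volume.restrict (Set.Icc (0:ℝ) 1))
      (Set.univ.pi fun _ => Set.Icc (0:ℝ) 1)ᶜ = 0 := by
    rw [← Measure.restrict_pi_pi]
    exact ae_restrict_mem (.univ_pi fun _ => measurableSet_Icc)
  exact ⟨fun μ _ _ => energyK_prod _ μ hf, capK_le_capK_prod _ hcube F hf⟩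

/-- Projection theorem for capacities (upper-bound direction): with `λ_m` normalized
Lebesgue measure on `[0,1]^m` and `(Π_m f)(x) := ∬_{[0,1]^m×[0,1]^m} f(y - z, x) dy dz`,
for every probability measure `μ` on the compact set `F`, the `f`-energy of `λ_m × μ`
equals the `(Π_m f)`-energy of `μ`; consequently `Cap_{Π_m f}(F) ≤ Cap_f([0,1]^m × F)`. -/
theorem stmt_7 (m k : ℕ) (hm : 1 ≤ m)
    (f : (Fin m → ℝ) × (Fin k → ℝ) → ℝ≥0∞) (hf : Measurable f)
    (F : Set (Fin k → ℝ)) (hF : IsCompact F) :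
    (∀ μ : Measure (Fin k → ℝ), IsProbabilityMeasure μ → μ Fᶜ = 0 →
      energyK f ((Measure.pi fun _ : Fin m => volume.restrict (Set.Icc (0:ℝ) 1)).prod μ)
        = energyK (fun x : Fin k → ℝ =>
            ∫⁻ y, ∫⁻ z, f (y - z, x)
              ∂(Measure.pi fun _ : Fin m => volume.restrict (Set.Icc (0:ℝ) 1))
              ∂(Measure.pi fun _ : Fin m => volume.restrict (Set.Icc (0:ℝ) 1))) μ) ∧
    capK (fun x : Fin k → ℝ =>
        ∫⁻ y, ∫⁻ z, f (y - z, x)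
          ∂(Measure.pi fun _ : Fin m => volume.restrict (Set.Icc (0:ℝ) 1))
          ∂(Measure.pi fun _ : Fin m => volume.restrict (Set.Icc (0:ℝ) 1))) F
      ≤ capK f ((Set.univ.pi fun _ : Fin m => Set.Icc (0:ℝ) 1) ×ˢ F) :=
  stmt_7_general m k f hf F
end

section
/- Minkowski dimension via an integral of the packing number: For a nonempty bounded set F ⊂ ℝ, the upper Minkowski dimension satisfies dim_M F = inf{ q ∈ ℝ : ∫₁^∞ K_F(1/s) s^{-1-q} ds < ∞ }, where K_F(ε) is the maximal number of ε-separated points of F and dim_M F := limsup_{n→∞} log M_n(F)/log n with M_n(F) the number of intervals [i/n,(i+1)/n) meeting F. -/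
open Filter MeasureTheory

/-- The Minkowski content of `F` at scale `1/n`. -/
noncomputable def Mink (F : Set ℝ) (n : ℕ) : ℕ :=
  Nat.card {i : ℤ // (F ∩ Set.Ico ((i : ℝ) / n) (((i : ℝ) + 1) / n)).Nonempty}

/-- The Kolmogorov entropy (packing number) of `F`. -/
noncomputable def Kol (F : Set ℝ) (ε : ℝ) : ℕ :=
  sSup {K : ℕ | ∃ x : Fin K → ℝ, (∀ i, x i ∈ F) ∧ ∀ i j, i ≠ j → ε ≤ |x i - x j|}

/-!
Write `φ s = K_F(1/s)`, a monotone function; both sides of the identity are its polynomial growth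
exponent. Grid cells give `K_F(1/n) ≤ M_n(F) ≤ 2 K_F(1/n)` (points of `F` in distinct cells of
the same parity are `1/n`-separated), so the limsup is the growth exponent of `φ` along the
integers, and by monotonicity along the reals. If `φ(s) = O(s^p)` with `p < q`, the integral
converges by comparison with `s^(p-1-q)`; conversely, if it converges then
`φ(t) t^(-q) ≲ ∫_t^{2t} φ(s) s^(-1-q) ds` stays bounded.
-/

open Set Asymptotics Topology Bornology

theorem Int.one_lt_abs_sub_of_two_le_abs_sub_floor {u v : ℝ} (h : 2 ≤ |⌊u⌋ - ⌊v⌋|) :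
    1 < |u - v| := by
  have hu := Int.floor_le u
  have hu' := Int.lt_floor_add_one u
  have hv := Int.floor_le v
  have hv' := Int.lt_floor_add_one v
  rcases le_abs'.mp h with h | h
  · have : (⌊u⌋ : ℝ) - ⌊v⌋ ≤ -2 := by exact_mod_cast h
    rw [abs_sub_comm]; exact lt_abs.mpr (Or.inl (by linarith))
  · have : (2 : ℝ) ≤ ⌊u⌋ - ⌊v⌋ := by exact_mod_cast h
    exact lt_abs.mpr (Or.inl (by linarith))

theorem Int.two_le_abs_sub_of_even_iff {i j : ℤ} (hij : i ≠ j) (h : Even i ↔ Even j) :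
    2 ≤ |i - j| := by
  obtain ⟨k, hk⟩ := Int.even_sub.mpr h
  rcases abs_cases (i - j) with ⟨h1, _⟩ | ⟨h1, _⟩ <;> omega

section GrowthExponent

variable {a : ℕ → ℝ}

theorem eventually_log_div_log_nonneg (ha : ∀ᶠ n in atTop, 1 ≤ a n) :
    ∀ᶠ n : ℕ in atTop, 0 ≤ Real.log (a n) / Real.log n := by
  filter_upwards [ha] with n h
  exact div_nonneg (Real.log_nonneg h) (Real.log_natCast_nonneg n)

theorem eventually_log_div_log_lt {C q η : ℝ} (hC : 0 < C) (ha : ∀ᶠ n in atTop, 0 < a n)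
    (hle : ∀ᶠ n in atTop, a n ≤ C * n ^ q) (hη : 0 < η) :
    ∀ᶠ n : ℕ in atTop, Real.log (a n) / Real.log n < q + η := by
  have hC0 : Tendsto (fun n : ℕ => Real.log C / Real.log n) atTop (𝓝 0) :=
    tendsto_const_nhds.div_atTop (Real.tendsto_log_atTop.comp tendsto_natCast_atTop_atTop)
  filter_upwards [ha, hle, hC0.eventually (gt_mem_nhds hη), eventually_ge_atTop 2]
    with n ha hle hCη hn
  have hn0 : (0 : ℝ) < n := by positivity
  have hlogn : 0 < Real.log n := Real.log_pos (by exact_mod_cast hn)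
  have hlog : Real.log (a n) ≤ Real.log C + q * Real.log n := by
    rw [← Real.log_rpow hn0, ← Real.log_mul hC.ne' (by positivity)]
    exact Real.log_le_log ha hle
  rw [div_lt_iff₀ hlogn] at hCη ⊢
  linarith

theorem limsup_log_div_log_le {C q : ℝ} (hC : 0 < C) (ha : ∀ᶠ n in atTop, 1 ≤ a n)
    (hle : ∀ᶠ n in atTop, a n ≤ C * n ^ q) :
    limsup (fun n : ℕ => Real.log (a n) / Real.log n) atTop ≤ q :=
  le_of_forall_pos_le_add fun _ hη =>
    limsup_le_of_le (isCoboundedUnder_le_of_eventually_le atTop (eventually_log_div_log_nonneg ha))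
      ((eventually_log_div_log_lt hC (ha.mono fun _ h => zero_lt_one.trans_le h) hle hη).mono
        fun _ h => h.le)

theorem eventually_le_rpow_of_limsup_lt {q : ℝ}
    (hbdd : IsBoundedUnder (· ≤ ·) atTop fun n : ℕ => Real.log (a n) / Real.log n)
    (ha : ∀ᶠ n in atTop, 0 < a n)
    (hq : limsup (fun n : ℕ => Real.log (a n) / Real.log n) atTop < q) :
    ∀ᶠ n : ℕ in atTop, a n ≤ n ^ q := by
  filter_upwards [eventually_lt_of_limsup_lt hq hbdd, ha, eventually_ge_atTop 2] with n hlt ha hn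
  have hn0 : (0 : ℝ) < n := by positivity
  rw [div_lt_iff₀ (Real.log_pos (by exact_mod_cast hn)), ← Real.log_rpow hn0,
    Real.log_lt_log_iff ha (by positivity)] at hlt
  exact hlt.le

end GrowthExponent

section IntegralCriterion

variable {φ : ℝ → ℝ}

theorem Real.min_one_two_rpow_mul_rpow_le {r s t : ℝ} (ht : 0 < t) (hts : t ≤ s)
    (hs : s ≤ 2 * t) : min 1 (2 ^ r) * t ^ r ≤ s ^ r := by
  rcases le_total 0 r with hr | hr
  · calc min 1 (2 ^ r) * t ^ r ≤ 1 * t ^ r := by gcongr; exact min_le_left _ _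
      _ ≤ s ^ r := by rw [one_mul]; exact Real.rpow_le_rpow ht.le hts hr
  · calc min 1 (2 ^ r) * t ^ r ≤ 2 ^ r * t ^ r := by gcongr; exact min_le_right _ _
      _ = (2 * t) ^ r := (Real.mul_rpow zero_le_two ht.le).symm
      _ ≤ s ^ r := Real.rpow_le_rpow_of_nonpos (ht.trans_le hts) hs hr

theorem integrableOn_Ici_mul_rpow_of_isBigO (hφ : MonotoneOn φ (Ici 1)) {p q : ℝ}
    (hφp : φ =O[atTop] fun s => s ^ p) (hpq : p < q) :
    IntegrableOn (fun s => φ s * s ^ (-1 - q)) (Ici 1) := by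
  refine LocallyIntegrableOn.integrableOn_of_isBigO_atTop (g := fun s => s ^ (p - 1 - q))
    ?_ ?_ (integrableAtFilter_rpow_atTop_iff.mpr (by linarith))
  · rw [locallyIntegrableOn_iff isClosed_Ici.isLocallyClosed]
    intro k hk hkc
    refine ((hφ.mono hk).integrableOn_isCompact hkc).mul_continuousOn (fun s hs => ?_) hkc
    have hs0 : s ≠ 0 := (zero_lt_one.trans_le (hk hs)).ne'
    exact (Real.continuousAt_rpow_const s _ (Or.inl hs0)).continuousWithinAt
  · refine (hφp.mul (isBigO_refl (fun s : ℝ => s ^ (-1 - q)) atTop)).congr' EventuallyEq.rfl ?_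
    filter_upwards [eventually_gt_atTop 0] with s hs
    rw [← Real.rpow_add hs]
    ring_nf

theorem exists_le_mul_rpow_of_integrableOn (hφ : MonotoneOn φ (Ici 1)) {q : ℝ}
    (hint : IntegrableOn (fun s => φ s * s ^ (-1 - q)) (Ioi 1)) :
    ∃ C > 0, ∀ t, 1 ≤ t → φ t ≤ C * t ^ q := by
  set I := ∫ s in Ioi 1, ‖φ s * s ^ (-1 - q)‖
  set c := min 1 ((2 : ℝ) ^ (-1 - q))
  have hc : 0 < c := lt_min one_pos (by positivity)
  have hI : 0 ≤ I := integral_nonneg fun _ => norm_nonneg _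
  refine ⟨I / c + 1, by positivity, fun t ht => ?_⟩
  have ht0 : 0 < t := zero_lt_one.trans_le ht
  rcases le_or_gt (φ t) 0 with hφt | hφt
  · exact hφt.trans (by positivity)
  have hsub : Ioc t (2 * t) ⊆ Ioi 1 := fun s hs => ht.trans_lt hs.1
  have hmass : φ t * c * t ^ (-q) ≤ I := by
    calc φ t * c * t ^ (-q) = φ t * (c * t ^ (-1 - q)) * volume.real (Ioc t (2 * t)) := by
          rw [Real.volume_real_Ioc_of_le (by linarith), show -1 - q = -q - 1 by ring,
            Real.rpow_sub_one ht0.ne']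
          field_simp
          ring
      _ ≤ ∫ s in Ioc t (2 * t), ‖φ s * s ^ (-1 - q)‖ := by
          refine setIntegral_ge_of_const_le_real measurableSet_Ioc measure_Ioc_lt_top.ne
            (fun s hs => ?_) (IntegrableOn.mono_set hint.norm hsub)
          have hts : t ≤ s := hs.1.le
          refine le_trans ?_ (Real.le_norm_self _)
          exact mul_le_mul (hφ ht (ht.trans hts) hts)
            (Real.min_one_two_rpow_mul_rpow_le ht0 hts hs.2) (by positivity)
            (hφt.le.trans (hφ ht (ht.trans hts) hts))
      _ ≤ I := setIntegral_mono_set hint.norm (ae_of_all _ fun _ => norm_nonneg _)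
          hsub.eventuallyLE
  have htq : 0 < t ^ q := by positivity
  rw [Real.rpow_neg ht0.le, ← div_eq_mul_inv, div_le_iff₀ htq] at hmass
  calc φ t ≤ I / c * t ^ q := by rw [div_mul_eq_mul_div, le_div_iff₀ hc]; linarith
    _ ≤ (I / c + 1) * t ^ q := by gcongr; linarith

end IntegralCriterion

def HasSeparated (F : Set ℝ) (ε : ℝ) (K : ℕ) : Prop :=
  ∃ x : Fin K → ℝ, (∀ i, x i ∈ F) ∧ ∀ i j, i ≠ j → ε ≤ |x i - x j|

section GridCounts

variable {F : Set ℝ} {ε ε' : ℝ} {K n : ℕ}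

theorem mink_eq_ncard_image_floor (hn : 0 < n) :
    Mink F n = ((fun y : ℝ => ⌊y * n⌋) '' F).ncard := by
  have hn' : (0 : ℝ) < n := by exact_mod_cast hn
  rw [Mink, ← Nat.card_coe_set_eq]
  refine Nat.card_congr (Equiv.subtypeEquivRight fun i => ?_)
  simp only [mem_image, Int.floor_eq_iff, Set.Nonempty, mem_inter_iff, mem_Ico,
    div_le_iff₀ hn', lt_div_iff₀ hn']

theorem image_floor_mul_subset_Icc (hF : IsBounded F) {c : ℝ} (hc : 0 ≤ c) :
    ((fun y : ℝ => ⌊y * c⌋) '' F) ⊆ Finset.Icc ⌊sInf F * c⌋ ⌊sSup F * c⌋ := by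
  rintro _ ⟨y, hy, rfl⟩
  have := hF.subset_Icc_sInf_sSup hy
  simp only [Finset.coe_Icc, mem_Icc]
  exact ⟨Int.floor_le_floor (by gcongr; exact this.1),
    Int.floor_le_floor (by gcongr; exact this.2)⟩

theorem finite_image_floor_mul (hF : IsBounded F) {c : ℝ} (hc : 0 ≤ c) :
    ((fun y : ℝ => ⌊y * c⌋) '' F).Finite :=
  (Finset.finite_toSet _).subset (image_floor_mul_subset_Icc hF hc)

theorem one_le_mink (hne : F.Nonempty) (hF : IsBounded F) (hn : 0 < n) :
    1 ≤ Mink F n := by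
  rw [mink_eq_ncard_image_floor hn, Nat.one_le_iff_ne_zero, ← Nat.pos_iff_ne_zero,
    ncard_pos (finite_image_floor_mul hF n.cast_nonneg)]
  exact hne.image _

theorem exists_mink_le_mul (hF : IsBounded F) :
    ∃ C > 0, ∀ n : ℕ, 0 < n → (Mink F n : ℝ) ≤ C * n := by
  refine ⟨|sSup F - sInf F| + 2, by positivity, fun n hn => ?_⟩
  have hn' : (1 : ℝ) ≤ n := by exact_mod_cast hn
  have hcard : Mink F n ≤ (Finset.Icc ⌊sInf F * n⌋ ⌊sSup F * n⌋).card := by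
    rw [mink_eq_ncard_image_floor hn, ← ncard_coe_finset]
    exact ncard_le_ncard (image_floor_mul_subset_Icc hF n.cast_nonneg) (Finset.finite_toSet _)
  have hlen : ((Finset.Icc ⌊sInf F * n⌋ ⌊sSup F * n⌋).card : ℝ)
      ≤ |sSup F - sInf F| * n + 2 := by
    rw [Int.card_Icc, ← Int.cast_natCast, Int.toNat_eq_max, Int.cast_max]
    have := Int.floor_le (sSup F * n)
    have := Int.lt_floor_add_one (sInf F * n)
    push_cast
    have := le_abs_self (sSup F - sInf F)
    refine max_le (by nlinarith) (by positivity)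
  calc (Mink F n : ℝ) ≤ |sSup F - sInf F| * n + 2 := (Nat.cast_le.mpr hcard).trans hlen
    _ ≤ |sSup F - sInf F| * n + 2 * n := by gcongr; linarith
    _ = _ := by ring

theorem hasSeparated_zero : HasSeparated F ε 0 :=
  ⟨Fin.elim0, fun i => i.elim0, fun i => i.elim0⟩

theorem HasSeparated.mono (h : HasSeparated F ε K) (hε : ε' ≤ ε) : HasSeparated F ε' K :=
  let ⟨x, hxF, hx⟩ := h
  ⟨x, hxF, fun i j hij => hε.trans (hx i j hij)⟩

theorem HasSeparated.le_mink (hF : IsBounded F) (h : HasSeparated F ε K) (hn : 0 < n)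
    (hε : 1 / n ≤ ε) : K ≤ Mink F n := by
  obtain ⟨x, hxF, hx⟩ := h
  have hn' : (0 : ℝ) < n := by exact_mod_cast hn
  have hinj : Function.Injective fun i => ⌊x i * n⌋ := by
    intro i j hij
    by_contra hne
    have hlt := Int.abs_sub_lt_one_of_floor_eq_floor hij
    rw [← sub_mul, abs_mul, abs_of_pos hn', ← lt_div_iff₀ hn'] at hlt
    exact (hε.trans (hx i j hne)).not_gt hlt
  rw [mink_eq_ncard_image_floor hn]
  simpa using ncard_le_ncard_of_injOn (s := univ) _ (fun i _ => mem_image_of_mem _ (hxF i))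
    hinj.injOn (finite_image_floor_mul hF n.cast_nonneg)

theorem bddAbove_hasSeparated (hF : IsBounded F) (hε : 0 < ε) :
    BddAbove {K | HasSeparated F ε K} := by
  have hn : 0 < ⌈1 / ε⌉₊ := Nat.ceil_pos.mpr (by positivity)
  refine ⟨Mink F ⌈1 / ε⌉₊, fun K hK => hK.le_mink hF hn ?_⟩
  rw [one_div_le (by exact_mod_cast hn) hε]
  exact Nat.le_ceil _

theorem hasSeparated_kol (hF : IsBounded F) (hε : 0 < ε) :
    HasSeparated F ε (Kol F ε) :=
  Nat.sSup_mem ⟨0, hasSeparated_zero⟩ (bddAbove_hasSeparated hF hε)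

theorem HasSeparated.le_kol (hF : IsBounded F) (hε : 0 < ε) (h : HasSeparated F ε K) :
    K ≤ Kol F ε :=
  le_csSup (bddAbove_hasSeparated hF hε) h

theorem kol_antitoneOn (hF : IsBounded F) : AntitoneOn (Kol F) (Ioi 0) :=
  fun _ hε _ _ h => csSup_le_csSup (bddAbove_hasSeparated hF hε) ⟨0, hasSeparated_zero⟩
    fun _ hK => HasSeparated.mono hK h

theorem monotoneOn_kol_one_div (hF : IsBounded F) :
    MonotoneOn (fun s : ℝ => (Kol F (1 / s) : ℝ)) (Ioi 0) := fun s hs t ht hst => by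
  have hs : (0 : ℝ) < s := hs
  have ht : (0 : ℝ) < t := ht
  simp only
  exact_mod_cast kol_antitoneOn hF (one_div_pos.mpr ht) (one_div_pos.mpr hs)
    (one_div_le_one_div_of_le hs hst)

theorem kol_le_mink (hF : IsBounded F) (hn : 0 < n) : Kol F (1 / n) ≤ Mink F n :=
  (hasSeparated_kol hF (by positivity)).le_mink hF hn le_rfl

theorem hasSeparated_ncard_of_pairwise (hn : 0 < n) {T : Set ℤ}
    (hT : T ⊆ (fun y : ℝ => ⌊y * n⌋) '' F) (hTfin : T.Finite)
    (hsep : T.Pairwise fun i j => 2 ≤ |i - j|) : HasSeparated F (1 / n) T.ncard := by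
  have hn' : (0 : ℝ) < n := by exact_mod_cast hn
  have : Finite T := hTfin
  choose y hyF hy using fun t : T => hT t.2
  let e := (Finite.equivFin T).symm
  refine ⟨fun i => y (e i), fun i => hyF (e i), fun i j hij => ?_⟩
  have hfar := hsep (e i).2 (e j).2 fun h => hij (e.injective (Subtype.ext h))
  rw [← hy, ← hy] at hfar
  have := Int.one_lt_abs_sub_of_two_le_abs_sub_floor hfar
  rw [← sub_mul, abs_mul, abs_of_pos hn', ← div_lt_iff₀ hn'] at this
  exact this.le

theorem mink_le_two_mul_kol (hF : IsBounded F) (hn : 0 < n) :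
    Mink F n ≤ 2 * Kol F (1 / n) := by
  set S := (fun y : ℝ => ⌊y * n⌋) '' F
  have hS := finite_image_floor_mul hF n.cast_nonneg (F := F)
  have hpart :
      ∀ T ⊆ S, T.Pairwise (fun i j => Even i ↔ Even j) → T.ncard ≤ Kol F (1 / n) :=
    fun T hTS hT => HasSeparated.le_kol hF (by positivity) <|
      hasSeparated_ncard_of_pairwise hn hTS (hS.subset hTS) fun i hi j hj hij =>
        Int.two_le_abs_sub_of_even_iff hij (hT hi hj hij)
  have heven := hpart (S ∩ {i | Even i}) inter_subset_left fun i hi j hj _ => by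
    simp only [mem_inter_iff, mem_ofPred_eq] at hi hj
    exact iff_of_true hi.2 hj.2
  have hodd := hpart (S \ {i | Even i}) sdiff_subset fun i hi j hj _ => by
    simp only [Set.mem_sdiff, mem_ofPred_eq] at hi hj
    exact iff_of_false hi.2 hj.2
  rw [mink_eq_ncard_image_floor hn, ← ncard_inter_add_ncard_sdiff_eq_ncard S {i | Even i} hS]
  omega

theorem isBigO_kol_one_div_rpow (hF : IsBounded F) {p : ℝ} (hp : 0 ≤ p)
    (h : ∀ᶠ n : ℕ in atTop, (Mink F n : ℝ) ≤ n ^ p) :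
    (fun s : ℝ => (Kol F (1 / s) : ℝ)) =O[atTop] fun s => s ^ p := by
  obtain ⟨N, hN⟩ := eventually_atTop.mp h
  refine IsBigO.of_bound (2 ^ p) ?_
  filter_upwards [eventually_ge_atTop (N : ℝ), eventually_ge_atTop 1] with s hsN hs1
  have hs0 : 0 < s := zero_lt_one.trans_le hs1
  have hn : 0 < ⌈s⌉₊ := Nat.ceil_pos.mpr hs0
  rw [Real.norm_natCast, Real.norm_of_nonneg (by positivity)]
  calc (Kol F (1 / s) : ℝ) ≤ Kol F (1 / ⌈s⌉₊) :=
        monotoneOn_kol_one_div hF hs0 (mem_Ioi.mpr (by exact_mod_cast hn)) (Nat.le_ceil s)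
    _ ≤ Mink F ⌈s⌉₊ := by exact_mod_cast kol_le_mink hF hn
    _ ≤ (⌈s⌉₊ : ℝ) ^ p := hN _ (Nat.cast_le.mp (hsN.trans (Nat.le_ceil s)))
    _ ≤ (2 * s) ^ p :=
        Real.rpow_le_rpow (by positivity) (by linarith [Nat.ceil_lt_add_one hs0.le]) hp
    _ = 2 ^ p * s ^ p := Real.mul_rpow zero_le_two hs0.le

theorem eventually_one_le_mink (hne : F.Nonempty) (hF : IsBounded F) :
    ∀ᶠ n : ℕ in atTop, (1 : ℝ) ≤ Mink F n :=
  (eventually_gt_atTop 0).mono fun _ hn => by exact_mod_cast one_le_mink hne hF hn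

theorem isBoundedUnder_log_mink_div_log (hne : F.Nonempty) (hF : IsBounded F) :
    IsBoundedUnder (· ≤ ·) atTop fun n : ℕ => Real.log (Mink F n) / Real.log n := by
  obtain ⟨C, hC, hlin⟩ := exists_mink_le_mul hF
  refine isBoundedUnder_of_eventually_le <| (eventually_log_div_log_lt (q := 1) hC
    ((eventually_one_le_mink hne hF).mono fun _ h => one_pos.trans_le h)
    ((eventually_gt_atTop 0).mono fun n hn => by simpa using hlin n hn) one_pos).mono
    fun _ h => h.le

theorem limsup_log_mink_div_log_le (hne : F.Nonempty) (hF : IsBounded F) {q : ℝ}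
    (hq : IntegrableOn (fun s : ℝ => (Kol F (1 / s) : ℝ) * s ^ (-1 - q)) (Ioi 1)) :
    limsup (fun n : ℕ => Real.log (Mink F n) / Real.log n) atTop ≤ q := by
  obtain ⟨C, hC, hCq⟩ := exists_le_mul_rpow_of_integrableOn
    ((monotoneOn_kol_one_div hF).mono (Ici_subset_Ioi.mpr one_pos)) hq
  refine limsup_log_div_log_le (by positivity : 0 < 2 * C) (eventually_one_le_mink hne hF) ?_
  filter_upwards [eventually_gt_atTop 0] with n hn
  calc (Mink F n : ℝ) ≤ 2 * Kol F (1 / n) := by exact_mod_cast mink_le_two_mul_kol hF hn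
    _ ≤ 2 * (C * n ^ q) := by gcongr; exact hCq n (by exact_mod_cast hn)
    _ = 2 * C * n ^ q := by ring

theorem integrableOn_kol_one_div_mul_rpow (hne : F.Nonempty) (hF : IsBounded F) {q : ℝ}
    (hq : limsup (fun n : ℕ => Real.log (Mink F n) / Real.log n) atTop < q) :
    IntegrableOn (fun s : ℝ => (Kol F (1 / s) : ℝ) * s ^ (-1 - q)) (Ioi 1) := by
  have hbdd := isBoundedUnder_log_mink_div_log hne hF
  set d := limsup (fun n : ℕ => Real.log (Mink F n) / Real.log n) atTop
  have hd0 : 0 ≤ d :=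
    le_limsup_of_frequently_le
      (eventually_log_div_log_nonneg (eventually_one_le_mink hne hF)).frequently hbdd
  have hgrowth := eventually_le_rpow_of_limsup_lt hbdd
    ((eventually_one_le_mink hne hF).mono fun _ h => one_pos.trans_le h)
    (by linarith : d < (d + q) / 2)
  refine (integrableOn_Ici_mul_rpow_of_isBigO
    ((monotoneOn_kol_one_div hF).mono (Ici_subset_Ioi.mpr one_pos))
    (isBigO_kol_one_div_rpow hF (by linarith) hgrowth) (by linarith)).mono_set Ioi_subset_Ici_self

end GridCounts

/-- Upper Minkowski dimension via an integral of the packing number: for nonempty bounded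
`F ⊂ ℝ`, `dim_M F = limsup_n log M_n(F)/log n` equals
`inf{q ∈ ℝ : ∫₁^∞ K_F(1/s) s^{-1-q} ds < ∞}`. -/
theorem stmt_18 (F : Set ℝ) (hne : F.Nonempty) (hbd : Bornology.IsBounded F) :
    limsup (fun n : ℕ => Real.log (Mink F n) / Real.log n) atTop
      = sInf {q : ℝ |
          IntegrableOn (fun s : ℝ => (Kol F (1 / s) : ℝ) * s ^ (-1 - q)) (Set.Ioi 1)} := by
  set d := limsup (fun n : ℕ => Real.log (Mink F n) / Real.log n) atTop
  have hint : ∀ q, d < q → IntegrableOn (fun s : ℝ => (Kol F (1 / s) : ℝ) * s ^ (-1 - q))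
      (Ioi 1) := fun _ hq => integrableOn_kol_one_div_mul_rpow hne hbd hq
  exact (csInf_eq_of_forall_ge_of_forall_gt_exists_lt ⟨d + 1, hint _ (by linarith)⟩
    (fun _ hq => limsup_log_mink_div_log_le hne hbd hq)
    fun w hw => ⟨(d + w) / 2, hint _ (by linarith), by linarith⟩).symm
end
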